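/- The competition number of the hexahedron graph (the 3-dimensional cube graph Q_3) equals 6. -/

import Mathlib

open SimpleGraph

/-- The competition graph of a digraph `D` (given as a relation): distinct vertices
`x`, `y` are adjacent iff they have a common out-neighbor in `D`. -/
def CompetitionGraph {V : Type*} (D : V → V → Prop) : SimpleGraph V where
  Adj x y := x ≠ y ∧ ∃ v, D x v ∧ D y v
  symm := by refine ⟨?_⟩; rintro x y ⟨h, v, hx, hy⟩; exact ⟨h.symm, v, hy, hx⟩
  loopless := by refine ⟨?_⟩; rintro x ⟨h, -⟩; exact h rfl

/-- A digraph is acyclic iff it has no directed cycle, i.e. no vertex reaches itself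
by a nonempty directed walk. -/
def DigraphAcyclic {V : Type*} (D : V → V → Prop) : Prop :=
  ∀ v, ¬ Relation.TransGen D v v

/-- The graph `G` together with `k` additional isolated vertices. -/
def addIsolated {V : Type*} (G : SimpleGraph V) (k : ℕ) : SimpleGraph (V ⊕ Fin k) where
  Adj a b := ∃ x y, a = Sum.inl x ∧ b = Sum.inl y ∧ G.Adj x y
  symm := by refine ⟨?_⟩; rintro a b ⟨x, y, rfl, rfl, h⟩; exact ⟨y, x, rfl, rfl, h.symm⟩
  loopless := by
    refine ⟨?_⟩
    rintro a ⟨x, y, rfl, hy, h⟩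
    obtain rfl := Sum.inl_injective hy
    exact G.loopless.irrefl x h

/-- `G` plus `k` isolated vertices is the competition graph of some acyclic digraph. -/
def IsCompetitionWitness {V : Type*} (G : SimpleGraph V) (k : ℕ) : Prop :=
  ∃ D : (V ⊕ Fin k) → (V ⊕ Fin k) → Prop,
    DigraphAcyclic D ∧ CompetitionGraph D = addIsolated G k

/-- The competition number of `G`: the least `k` such that `G` plus `k` isolated
vertices is the competition graph of an acyclic digraph. -/
noncomputable def compNum {V : Type*} (G : SimpleGraph V) : ℕ :=
  sInf {k | IsCompetitionWitness G k}

/-- The generalized edge clique cover number `θ_E(F; H)`: the minimum number of cliques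
of `G` contained in the vertex set `H` (i.e. cliques of the induced subgraph on `H`)
needed so that every edge in `F` has both endpoints in some clique of the family. -/
noncomputable def thetaEOn {V : Type*} (G : SimpleGraph V) (F : Set (Sym2 V)) (H : Set V) : ℕ :=
  sInf {n | ∃ f : Fin n → Set V,
    (∀ i, f i ⊆ H ∧ G.IsClique (f i)) ∧ ∀ e ∈ F, ∃ i, ∀ x ∈ e, x ∈ f i}

/-- The edge clique cover number `θ_E(G)`. -/
noncomputable def thetaE {V : Type*} (G : SimpleGraph V) : ℕ :=
  thetaEOn G G.edgeSet Set.univ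

/-- The vertex clique cover number of the subgraph of `G` induced on `S`: the minimum
number of cliques of `G` contained in `S` whose union covers `S`. -/
noncomputable def thetaVOn {V : Type*} (G : SimpleGraph V) (S : Set V) : ℕ :=
  sInf {n | ∃ f : Fin n → Set V,
    (∀ i, f i ⊆ S ∧ G.IsClique (f i)) ∧ ∀ v ∈ S, ∃ i, v ∈ f i}

/-- The closed neighborhood `N_G[U]` of a vertex subset. -/
def closedNbhd {V : Type*} (G : SimpleGraph V) (U : Set V) : Set V :=
  U ∪ {v | ∃ u ∈ U, G.Adj u v}

/-- The set `E_G[U]` of edges of `G` with at least one endpoint in `U`. -/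
def incidentEdges {V : Type*} (G : SimpleGraph V) (U : Set V) : Set (Sym2 V) :=
  {e | e ∈ G.edgeSet ∧ ∃ x ∈ e, x ∈ U}

/-- The 3-dimensional cube graph `Q_3`: vertices are functions `Fin 3 → Bool`,
adjacent iff they differ in exactly one coordinate. -/
def CubeGraph : SimpleGraph (Fin 3 → Bool) where
  Adj x y := (Finset.univ.filter fun i => x i ≠ y i).card = 1
  symm := by
    refine ⟨?_⟩
    intro x y h
    have : (Finset.univ.filter fun i => y i ≠ x i)
        = (Finset.univ.filter fun i => x i ≠ y i) := by
      apply Finset.filter_congr; intro i _; exact ne_comm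
    rw [this]; exact h
  loopless := by refine ⟨?_⟩; intro x h; simp at h

/-!
Lower bound (Opsut): if `G` plus `k` isolated vertices is the competition graph of an acyclic
digraph `D` and `G` is triangle-free, the in-neighbourhood of a vertex of `D` is a clique of `G`,
hence contains at most one edge; so distinct edges of `G` have distinct common preys. Each such
prey has two in-neighbours, which the first two vertices of a topological order of `D` do not.
Hence `|E| ≤ |V| + k - 2`.

Upper bound: along a Hamiltonian path `v₀, …, v_{n-1}` of `G`, let `v_{i+2}` be the common prey
of `v_i` and `v_{i+1}`, and give every other edge a prey among the isolated vertices; this needs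
`|E| - |V| + 2` of them.

The cube is bipartite, has 8 vertices and 12 edges, and the Gray code is a Hamiltonian path.
-/

open Finset

section Digraph

variable {W : Type*} {D : W → W → Prop}

theorem DigraphAcyclic.of_forall_lt (r : W → ℕ) (hr : ∀ a b, D a b → r a < r b) :
    DigraphAcyclic D := by
  intro v hv
  have hlt := hv.lift r hr
  rw [Relation.transGen_eq_self] at hlt
  exact lt_irrefl _ hlt

/-- A minimal vertex has no in-neighbour, and a minimal vertex among the others has at most
the first one as in-neighbour; so neither has two distinct in-neighbours. -/
theorem DigraphAcyclic.card_add_two_le [Fintype W] (hD : DigraphAcyclic D)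
    (hW : 2 ≤ Fintype.card W) (T : Finset W) (hT : ∀ w ∈ T, ∃ x y, x ≠ y ∧ D x w ∧ D y w) :
    #T + 2 ≤ Fintype.card W := by
  classical
  have : IsTrans W (Relation.TransGen D) := ⟨fun _ _ _ => Relation.TransGen.trans⟩
  have : Std.Irrefl (Relation.TransGen D) := ⟨hD⟩
  have hwf : WellFounded (Relation.TransGen D) := Finite.wellFounded_of_trans_of_irrefl _
  obtain ⟨a⟩ := (Fintype.card_pos_iff (α := W)).mp (by omega)
  obtain ⟨m₁, -, hm₁⟩ := hwf.has_min Set.univ ⟨a, trivial⟩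
  obtain ⟨b, hb⟩ : ∃ b, b ≠ m₁ := by
    by_contra! h
    have := Fintype.card_le_one_iff.mpr fun x y => (h x).trans (h y).symm
    omega
  obtain ⟨m₂, hm₂₁, hm₂⟩ := hwf.has_min {x | x ≠ m₁} ⟨b, hb⟩
  have hT_sub : T ⊆ univ \ {m₁, m₂} := by
    intro w hw
    obtain ⟨x, y, hxy, hx, hy⟩ := hT w hw
    simp only [mem_sdiff, mem_univ, mem_insert, mem_singleton, true_and, not_or]
    refine ⟨fun h => hm₁ x trivial (.single (h ▸ hx)), fun h => ?_⟩
    subst h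
    by_cases hx₁ : x = m₁
    · exact hm₂ y (fun hy₁ => hxy (hx₁.trans hy₁.symm)) (.single hy)
    · exact hm₂ x hx₁ (.single hx)
  calc #T + 2 ≤ #(univ \ {m₁, m₂}) + #({m₁, m₂} : Finset W) := by
        rw [card_pair (Ne.symm hm₂₁)]; exact Nat.add_le_add_right (card_le_card hT_sub) 2
    _ = Fintype.card W := by rw [card_sdiff_add_card_eq_card (subset_univ _), card_univ]

end Digraph

section Competition

variable {V : Type*} {G : SimpleGraph V} {k : ℕ}

@[simp]
theorem addIsolated_adj_inl_inl {x y : V} : (addIsolated G k).Adj (.inl x) (.inl y) ↔ G.Adj x y :=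
  ⟨fun ⟨_, _, hx, hy, h⟩ => Sum.inl_injective hx ▸ Sum.inl_injective hy ▸ h,
    fun h => ⟨x, y, rfl, rfl, h⟩⟩

theorem adj_iff_of_competitionGraph_eq {D : V ⊕ Fin k → V ⊕ Fin k → Prop}
    (h : CompetitionGraph D = addIsolated G k) {x y : V} :
    G.Adj x y ↔ x ≠ y ∧ ∃ w, D (.inl x) w ∧ D (.inl y) w := by
  rw [← addIsolated_adj_inl_inl (k := k), ← h]
  exact and_congr_left' Sum.inl_injective.ne_iff

theorem SimpleGraph.IsClique.eq_or_eq_of_cliqueFree_three (hG : G.CliqueFree 3) {S : Set V}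
    (hS : G.IsClique S) {a b c : V} (ha : a ∈ S) (hb : b ∈ S) (hc : c ∈ S) (hab : G.Adj a b) :
    c = a ∨ c = b := by
  classical
  by_contra! h
  exact hG {a, b, c} (is3Clique_triple_iff.mpr ⟨hab, hS ha hc h.1.symm, hS hb hc h.2.symm⟩)

theorem SimpleGraph.IsClique.subsingleton_edges_of_cliqueFree_three (hG : G.CliqueFree 3)
    {S : Set V} (hS : G.IsClique S) : {e ∈ G.edgeSet | ∀ x ∈ e, x ∈ S}.Subsingleton := by
  rintro e ⟨he, heS⟩ e' ⟨he', he'S⟩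
  induction e using Sym2.ind with | _ a b => ?_
  induction e' using Sym2.ind with | _ c d => ?_
  rw [mem_edgeSet] at he he'
  have hc := hS.eq_or_eq_of_cliqueFree_three hG (heS a (by simp)) (heS b (by simp))
    (he'S c (by simp)) he
  have hd := hS.eq_or_eq_of_cliqueFree_three hG (heS a (by simp)) (heS b (by simp))
    (he'S d (by simp)) he
  rcases hc with rfl | rfl <;> rcases hd with rfl | rfl
  · exact absurd he' (G.loopless.irrefl _)
  · rfl
  · exact Sym2.eq_swap
  · exact absurd he' (G.loopless.irrefl _)

theorem IsCompetitionWitness.card_edgeFinset_add_two_le [Fintype V] [DecidableRel G.Adj]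
    (hG : G.CliqueFree 3) (hV : 2 ≤ Fintype.card V) (h : IsCompetitionWitness G k) :
    #G.edgeFinset + 2 ≤ Fintype.card V + k := by
  classical
  obtain ⟨D, hD, hDG⟩ := h
  let T : Finset (V ⊕ Fin k) := {w | ∃ x y, x ≠ y ∧ D x w ∧ D y w}
  have hpreys : #G.edgeFinset ≤ #T := by
    refine card_le_card_of_forall_subsingleton (fun e w => ∀ x ∈ e, D (.inl x) w) ?_ ?_
    · intro e he
      induction e using Sym2.ind with | _ a b => ?_
      obtain ⟨hab, w, ha, hb⟩ := (adj_iff_of_competitionGraph_eq hDG).mp (mem_edgeFinset.mp he)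
      refine ⟨w, mem_filter.mpr ⟨mem_univ _, _, _, Sum.inl_injective.ne hab, ha, hb⟩, ?_⟩
      simp only [Sym2.mem_iff, forall_eq_or_imp, forall_eq]
      exact ⟨ha, hb⟩
    · intro w _
      have hclique : G.IsClique {x | D (.inl x) w} := fun x hx y hy hxy =>
        (adj_iff_of_competitionGraph_eq hDG).mpr ⟨hxy, w, hx, hy⟩
      refine (hclique.subsingleton_edges_of_cliqueFree_three hG).anti ?_
      rintro e ⟨he, hew⟩
      exact ⟨mem_edgeFinset.mp he, hew⟩
  have hT := hD.card_add_two_le (by simp only [Fintype.card_sum]; omega) T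
    fun w hw => (mem_filter.mp hw).2
  rw [Fintype.card_sum, Fintype.card_fin] at hT
  omega

end Competition

section Construction

variable {V : Type*} {G : SimpleGraph V} {k : ℕ}

def withFreshPreys (D₀ : V → V → Prop) (τ : Fin k → Sym2 V) : V ⊕ Fin k → V ⊕ Fin k → Prop
  | .inl x, .inl y => D₀ x y
  | .inl x, .inr j => x ∈ τ j
  | .inr _, _ => False

theorem isCompetitionWitness_withFreshPreys [Finite V] (D₀ : V → V → Prop) (ρ : V → ℕ)
    (hρ : ∀ x y, D₀ x y → ρ x < ρ y) (hD₀ : CompetitionGraph D₀ ≤ G) (τ : Fin k → Sym2 V)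
    (hτ : ∀ j, τ j ∈ G.edgeSet)
    (hcover : ∀ e ∈ G.edgeSet \ (CompetitionGraph D₀).edgeSet, ∃ j, τ j = e) :
    IsCompetitionWitness G k := by
  obtain ⟨N, hN⟩ := (Set.finite_range ρ).bddAbove
  refine ⟨withFreshPreys D₀ τ, DigraphAcyclic.of_forall_lt (Sum.elim ρ fun _ => N + 1) ?_, ?_⟩
  · rintro (x | i) (y | j) h
    · exact hρ x y h
    · exact Nat.lt_succ_of_le (hN ⟨x, rfl⟩)
    all_goals exact h.elim
  ext a b
  rcases a with x | i
  · rcases b with y | j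
    · simp only [addIsolated_adj_inl_inl]
      constructor
      · rintro ⟨hxy, (z | j), hx, hy⟩
        · exact hD₀ ⟨Sum.inl_injective.ne_iff.mp hxy, z, hx, hy⟩
        · exact G.adj_of_mem_incidenceSet (Sum.inl_injective.ne_iff.mp hxy) ⟨hτ j, hx⟩ ⟨hτ j, hy⟩
      · intro hxy
        refine ⟨Sum.inl_injective.ne_iff.mpr hxy.ne, ?_⟩
        by_cases h₀ : (CompetitionGraph D₀).Adj x y
        · obtain ⟨-, z, hx, hy⟩ := h₀
          exact ⟨.inl z, hx, hy⟩
        · obtain ⟨j, hj⟩ := hcover s(x, y) ⟨hxy, h₀⟩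
          refine ⟨.inr j, ?_, ?_⟩ <;> simp [withFreshPreys, hj]
    · exact iff_of_false (fun ⟨_, _, _, h⟩ => h.elim) fun ⟨_, _, _, h, _⟩ => Sum.inr_ne_inl h
  · exact iff_of_false (fun ⟨_, _, h, _⟩ => h.elim) fun ⟨_, _, h, _⟩ => Sum.inr_ne_inl h

end Construction

section HamiltonianPath

variable {V : Type*} {G : SimpleGraph V} {n : ℕ}

def pathPreys (σ : Fin n ≃ V) (x z : V) : Prop :=
  (σ.symm x : ℕ) < σ.symm z ∧ (σ.symm z : ℕ) ≤ σ.symm x + 2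

theorem competitionGraph_pathPreys_le (σ : Fin n ≃ V)
    (hσ : ∀ i j : Fin n, i.val + 1 = j.val → G.Adj (σ i) (σ j)) :
    CompetitionGraph (pathPreys σ) ≤ G := by
  rintro x y ⟨hxy, z, hx, hy⟩
  have hne : (σ.symm x : ℕ) ≠ σ.symm y := fun h => hxy (σ.symm.injective (Fin.ext h))
  rcases Nat.lt_or_gt_of_ne hne with h | h
  · simpa using hσ (σ.symm x) (σ.symm y) (by simp only [pathPreys] at hx hy; omega)
  · simpa using (hσ (σ.symm y) (σ.symm x) (by simp only [pathPreys] at hx hy; omega)).symm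

theorem le_ncard_edgeSet_competitionGraph_pathPreys [Finite V] (σ : Fin n ≃ V) :
    n ≤ (CompetitionGraph (pathPreys σ)).edgeSet.ncard + 2 := by
  let pathEdge : Fin (n - 2) → Sym2 V := fun i => s(σ ⟨i, by omega⟩, σ ⟨i + 1, by omega⟩)
  have hmaps : ∀ i ∈ Set.univ, pathEdge i ∈ (CompetitionGraph (pathPreys σ)).edgeSet := by
    intro i _
    refine ⟨fun h => ?_, σ ⟨i + 2, by omega⟩, ?_, ?_⟩
    · simpa using congrArg Fin.val (σ.injective h)
    all_goals simp only [pathPreys, Equiv.symm_apply_apply]; omega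
  have hinj : Set.InjOn pathEdge Set.univ := by
    intro i _ j _ hij
    rcases Sym2.eq_iff.mp hij with ⟨h, -⟩ | ⟨h₁, h₂⟩
    · exact Fin.ext (by simpa using congrArg Fin.val (σ.injective h))
    · have h₁' : (i : ℕ) = j + 1 := by simpa using congrArg Fin.val (σ.injective h₁)
      have h₂' : (i : ℕ) + 1 = j := by simpa using congrArg Fin.val (σ.injective h₂)
      omega
  have := Set.ncard_le_ncard_of_injOn pathEdge hmaps hinj (Set.toFinite _)
  rw [Set.ncard_univ, Nat.card_eq_fintype_card, Fintype.card_fin] at this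
  omega

variable [Fintype V] [DecidableRel G.Adj]

theorem exists_isCompetitionWitness_of_hamiltonian (σ : Fin n ≃ V)
    (hσ : ∀ i j : Fin n, i.val + 1 = j.val → G.Adj (σ i) (σ j)) :
    ∃ k, IsCompetitionWitness G k ∧ k + n ≤ #G.edgeFinset + 2 := by
  classical
  let H := CompetitionGraph (pathPreys σ)
  have hHG : H.edgeFinset ⊆ G.edgeFinset :=
    edgeFinset_subset_edgeFinset.mpr (competitionGraph_pathPreys_le σ hσ)
  have hH : n ≤ #H.edgeFinset + 2 := by
    simpa only [← coe_edgeFinset, Set.ncard_coe_finset] using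
      le_ncard_edgeSet_competitionGraph_pathPreys σ
  let M := G.edgeFinset \ H.edgeFinset
  refine ⟨#M, isCompetitionWitness_withFreshPreys (pathPreys σ) (fun x => σ.symm x)
    (fun _ _ h => h.1) (competitionGraph_pathPreys_le σ hσ) (fun j => (M.equivFin.symm j : Sym2 V))
    (fun j => ?_) (fun e he => ?_), ?_⟩
  · exact mem_edgeFinset.mp (mem_sdiff.mp (M.equivFin.symm j).2).1
  · exact ⟨M.equivFin ⟨e, by simpa [M] using he⟩, by simp⟩
  · have := card_le_card hHG
    rw [card_sdiff_of_subset hHG]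
    omega

theorem compNum_add_eq_of_hamiltonian (hG : G.CliqueFree 3) (hn : 2 ≤ n) (σ : Fin n ≃ V)
    (hσ : ∀ i j : Fin n, i.val + 1 = j.val → G.Adj (σ i) (σ j)) :
    compNum G + n = #G.edgeFinset + 2 := by
  have hV : Fintype.card V = n := by simpa using (Fintype.card_congr σ).symm
  obtain ⟨k, hk, hkn⟩ := exists_isCompetitionWitness_of_hamiltonian σ hσ
  have hle : compNum G ≤ k := Nat.sInf_le hk
  have hmin : IsCompetitionWitness G (compNum G) :=
    Nat.sInf_mem (s := {k | IsCompetitionWitness G k}) ⟨k, hk⟩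
  have hge := hmin.card_edgeFinset_add_two_le hG (hV ▸ hn)
  omega

end HamiltonianPath

instance : DecidableRel CubeGraph.Adj := fun _ _ => inferInstanceAs (Decidable (_ = 1))

theorem cubeGraph_cliqueFree_three : CubeGraph.CliqueFree 3 :=
  (Coloring.mk (fun x => x 0 ^^ x 1 ^^ x 2) (by decide) :
    CubeGraph.Coloring Bool).colorable.cliqueFree (by decide)

theorem card_edgeFinset_cubeGraph : #CubeGraph.edgeFinset = 12 := by decide

def grayCode (i : Fin 8) : Fin 3 → Bool := fun j => (i.val ^^^ i.val >>> 1).testBit j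

theorem grayCode_bijective : Function.Bijective grayCode := by decide

theorem cubeGraph_adj_grayCode :
    ∀ i j : Fin 8, i.val + 1 = j.val → CubeGraph.Adj (grayCode i) (grayCode j) := by
  decide

theorem competition_number_hexahedron :
    compNum CubeGraph = 6 := by
  have := compNum_add_eq_of_hamiltonian cubeGraph_cliqueFree_three (by norm_num)
    (Equiv.ofBijective grayCode grayCode_bijective) cubeGraph_adj_grayCode
  rw [card_edgeFinset_cubeGraph] at this
  omega
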